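/- Let n ≥ 1, let ρ be any 2^n × 2^n complex matrix, and let f, f' : Fin n → Fin 4 with f ≠ f'. Then summing over all 4^n Pauli strings Q = P_h (h : Fin n → Fin 4) one has ∑_h P_h · P_f · P_h · ρ · P_h · P_{f'} · P_h = 0 (the zero matrix). (Pauli Twirl.) -/
import Mathlib


open Matrix

/-- The four single-qubit Pauli matrices I, X, Y, Z. -/
noncomputable def pauli : Fin 4 → Matrix (Fin 2) (Fin 2) ℂ :=
  ![!![1, 0; 0, 1], !![0, 1; 1, 0], !![0, -Complex.I; Complex.I, 0], !![1, 0; 0, -1]]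

/-- The `n`-qubit Pauli string `⊗ᵢ σ_{f i}`, as a `2^n × 2^n` complex matrix
indexed by `Fin n → Fin 2`. -/
noncomputable def PauliString (n : ℕ) (f : Fin n → Fin 4) :
    Matrix (Fin n → Fin 2) (Fin n → Fin 2) ℂ :=
  Matrix.of fun x y => ∏ i, pauli (f i) (x i) (y i)

noncomputable def psign (a b : Fin 4) : ℂ :=
  if a = 0 ∨ b = 0 ∨ a = b then 1 else -1

lemma pauli_conj (a b : Fin 4) :
    pauli a * pauli b * pauli a = psign a b • pauli b := by
  fin_cases a <;> fin_cases b <;>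
    · ext i j
      fin_cases i <;> fin_cases j <;>
        simp [pauli, psign, Matrix.mul_apply, Fin.sum_univ_two] <;> ring

lemma psign_sum {a b : Fin 4} (hab : a ≠ b) :
    ∑ t : Fin 4, psign t a * psign t b = 0 := by
  fin_cases a <;> fin_cases b <;> first
    | exact absurd rfl hab
    | (simp (config := { decide := true }) only [psign, Fin.sum_univ_four]; norm_num)

noncomputable def kron (n : ℕ) (M : Fin n → Matrix (Fin 2) (Fin 2) ℂ) :
    Matrix (Fin n → Fin 2) (Fin n → Fin 2) ℂ :=
  Matrix.of fun x y => ∏ i, M i (x i) (y i)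

lemma pauliString_eq_kron (n : ℕ) (f : Fin n → Fin 4) :
    PauliString n f = kron n (fun i => pauli (f i)) := rfl

lemma kron_mul (n : ℕ) (M N : Fin n → Matrix (Fin 2) (Fin 2) ℂ) :
    kron n M * kron n N = kron n (fun i => M i * N i) := by
  ext x y
  simp only [kron, Matrix.mul_apply, Matrix.of_apply, ← Finset.prod_mul_distrib]
  rw [Finset.prod_univ_sum]
  simp [Fintype.piFinset_univ]

lemma kron_smul (n : ℕ) (c : Fin n → ℂ) (M : Fin n → Matrix (Fin 2) (Fin 2) ℂ) :
    kron n (fun i => c i • M i) = (∏ i, c i) • kron n M := by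
  ext x y
  simp [kron, Finset.prod_mul_distrib]

lemma conj_string (n : ℕ) (h f : Fin n → Fin 4) :
    PauliString n h * PauliString n f * PauliString n h =
      (∏ i, psign (h i) (f i)) • PauliString n f := by
  simp only [pauliString_eq_kron, kron_mul]
  rw [show (fun i => pauli (h i) * pauli (f i) * pauli (h i))
      = fun i => psign (h i) (f i) • pauli (f i) from
      funext fun i => pauli_conj (h i) (f i), kron_smul]

/-- **Pauli Twirl.** For distinct Pauli strings `P_f ≠ P_{f'}` and any matrix `ρ`,
`∑_h P_h P_f P_h ρ P_h P_{f'} P_h = 0`. -/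
theorem pauli_twirl (n : ℕ) (hn : 1 ≤ n)
    (ρ : Matrix (Fin n → Fin 2) (Fin n → Fin 2) ℂ)
    (f f' : Fin n → Fin 4) (hff' : f ≠ f') :
    ∑ h : Fin n → Fin 4,
      PauliString n h * PauliString n f * PauliString n h * ρ *
        PauliString n h * PauliString n f' * PauliString n h = 0 := by
  have key : ∀ h : Fin n → Fin 4,
      PauliString n h * PauliString n f * PauliString n h * ρ *
        PauliString n h * PauliString n f' * PauliString n h =
      (∏ i, psign (h i) (f i) * psign (h i) (f' i)) •
        (PauliString n f * ρ * PauliString n f') := by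
    intro h
    have e1 := conj_string n h f
    have e2 := conj_string n h f'
    calc PauliString n h * PauliString n f * PauliString n h * ρ *
          PauliString n h * PauliString n f' * PauliString n h
        = (PauliString n h * PauliString n f * PauliString n h) * ρ *
            (PauliString n h * PauliString n f' * PauliString n h) := by
          simp only [Matrix.mul_assoc]
      _ = ((∏ i, psign (h i) (f i)) • PauliString n f) * ρ *
            ((∏ i, psign (h i) (f' i)) • PauliString n f') := by rw [e1, e2]
      _ = (∏ i, psign (h i) (f i) * psign (h i) (f' i)) •
            (PauliString n f * ρ * PauliString n f') := by
          simp only [Matrix.smul_mul, Matrix.mul_smul, smul_smul,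
            Finset.prod_mul_distrib]
          rw [mul_comm]
  simp only [key, ← Finset.sum_smul]
  have hsum : ∑ h : Fin n → Fin 4, ∏ i, psign (h i) (f i) * psign (h i) (f' i) = 0 := by
    rw [← Fintype.piFinset_univ,
      ← Finset.prod_univ_sum (fun _ => (Finset.univ : Finset (Fin 4)))
        (fun i t => psign t (f i) * psign t (f' i))]
    obtain ⟨i0, hi0⟩ := Function.ne_iff.mp hff'
    exact Finset.prod_eq_zero (Finset.mem_univ i0) (psign_sum hi0)
  rw [hsum, zero_smul]
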